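/- arXiv:1705.04500 — 2 statements merged into one kernel-verified Lean document; each statement's English description precedes it below -/
import Mathlib

section
/- Let (E, C) be a finitely separated graph. The set E⁰_BF of vertices u such that u ⊸ v fails for every branching vertex v is hereditary: if e ∈ E¹ and r(e) ∈ E⁰_BF then s(e) ∈ E⁰_BF. Equivalently, the complement E⁰_Br = {u : u ⊸ v for some branching vertex v} satisfies: s(e) ∈ E⁰_Br implies r(e) ∈ E⁰_Br. -/
/-!
Admissibility is local: the letters of a word leave each vertex through *items* (the edges
starting there and the colour classes ending there), and a letter may follow another unless it
leaves through the item by which the other arrived.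

Let `α β α⁻¹` witness `s(e) ⊸ v`, words being read left to right. If `α` starts with `e`,
dropping that letter witnesses `r(e) ⊸ v`; if `α` is nonempty and does not start with `e`,
prepending `e⁻¹` does. If `α` is empty then `v = s(e)`: either the cycle `β` neither leaves nor
comes back through the item `e`, and `e⁻¹ β e` works, or, after possibly inverting `β`,
`β = e β'` with `β' : r(e) → v`. In that case the branching vertex `v` has two returning items
other than `e`, and their loops combine into a cycle avoiding either the item `e` (use the exit
`e⁻¹`) or the item by which `β'` comes back (use `β'`).
-/

namespace SepGraphStmt

/-- A finitely separated graph: a directed graph with a colouring of the edges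
such that edges of the same colour have the same range, and each colour class is finite.
(The colour classes with range `v` form the partition `C_v` of `r⁻¹(v)`.) -/
structure SepGraph (V E Λ : Type) where
  r : E → V
  s : E → V
  col : E → Λ
  col_range : ∀ e f, col e = col f → r e = r f
  col_finite : ∀ l : Λ, {e : E | col e = l}.Finite

variable {V E Λ : Type}

/-- A letter of the double graph: an edge together with a direction
(`true` = the edge itself, `false` = its formal inverse). -/
abbrev Letter (E : Type) := E × Bool

def src (G : SepGraph V E Λ) (a : Letter E) : V :=
  if a.2 then G.s a.1 else G.r a.1

def rng (G : SepGraph V E Λ) (a : Letter E) : V :=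
  if a.2 then G.r a.1 else G.s a.1

/-- Letter `b` may follow letter `a` in an admissible path
(words are written in application order: the first letter of a list is traversed first). -/
def ok (G : SepGraph V E Λ) (a b : Letter E) : Prop :=
  src G b = rng G a ∧
    (a.2 = false → b.2 = true → b.1 ≠ a.1) ∧
    (a.2 = true → b.2 = false → G.col b.1 ≠ G.col a.1)

def Admissible (G : SepGraph V E Λ) (w : List (Letter E)) : Prop :=
  List.Chain' (ok G) w

/-- Formal inverse of a word. -/
def wInv (w : List (Letter E)) : List (Letter E) :=
  (w.map fun a => (a.1, !a.2)).reverse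

/-- The source of the (nonempty) word is `v`. -/
def headIs (G : SepGraph V E Λ) (w : List (Letter E)) (v : V) : Prop :=
  ∀ a ∈ w.head?, src G a = v

/-- The range of the (nonempty) word is `v`. -/
def lastIs (G : SepGraph V E Λ) (w : List (Letter E)) (v : V) : Prop :=
  ∀ a ∈ w.getLast?, rng G a = v

/-- `w` is an admissible path from `u` to `v`. -/
def IsPath (G : SepGraph V E Λ) (w : List (Letter E)) (u v : V) : Prop :=
  Admissible G w ∧ (w = [] → u = v) ∧ headIs G w u ∧ lastIs G w v

/-- `w` is a closed path based at `v`. -/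
def IsClosed (G : SepGraph V E Λ) (w : List (Letter E)) (v : V) : Prop :=
  w ≠ [] ∧ Admissible G w ∧ headIs G w v ∧ lastIs G w v

/-- `w` is a cycle: a nontrivial path whose square is admissible. -/
def IsCycle (G : SepGraph V E Λ) (w : List (Letter E)) : Prop :=
  w ≠ [] ∧ Admissible G (w ++ w)

/-- `w` is a cycle based at `v`. -/
def CycleAt (G : SepGraph V E Λ) (w : List (Letter E)) (v : V) : Prop :=
  IsCycle G w ∧ headIs G w v

/-- A nontrivial admissible path `w` allows a return: some `βw` is a closed path. -/
def AllowsReturn (G : SepGraph V E Λ) (w : List (Letter E)) : Prop :=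
  w ≠ [] ∧ Admissible G w ∧ ∃ b u, IsClosed G (w ++ b) u

/-- A "returning item" at `v`: either an edge in `s⁻¹(v)` allowing a return,
or a colour class `X ∈ C_v` allowing a return. -/
def RetItem (G : SepGraph V E Λ) (v : V) : E ⊕ Λ → Prop
  | Sum.inl e => G.s e = v ∧ AllowsReturn G [(e, true)]
  | Sum.inr l => ∃ e, G.col e = l ∧ G.r e = v ∧ AllowsReturn G [(e, false)]

/-- `v` is a branching vertex. -/
def Branching (G : SepGraph V E Λ) (v : V) : Prop :=
  ∃ x y z : E ⊕ Λ, x ≠ y ∧ x ≠ z ∧ y ≠ z ∧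
    RetItem G v x ∧ RetItem G v y ∧ RetItem G v z

/-- The relation `u ⊸ v`: there is an admissible path `α : u → v` and a cycle `β`
based at `v` such that `α⁻¹βα` is admissible. -/
def Multimap (G : SepGraph V E Λ) (u v : V) : Prop :=
  ∃ α β, IsPath G α u v ∧ CycleAt G β v ∧ Admissible G (α ++ β ++ wInv α)

/-- A word is positively oriented w.r.t. an orientation `o`. -/
def Pos (o : E → Bool) (w : List (Letter E)) : Prop := ∀ a ∈ w, a.2 = o a.1

/-- A word is negatively oriented w.r.t. an orientation `o`. -/
def Neg (o : E → Bool) (w : List (Letter E)) : Prop := ∀ a ∈ w, a.2 = !o a.1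

/-- `o` is an orientation at `v` (Definition of orientation, with (2')). -/
def OrientAt (G : SepGraph V E Λ) (o : E → Bool) (v : V) : Prop :=
  ((∃ l : Λ, (∃ e, G.col e = l) ∧ (∀ e, (G.r e = v ∧ o e = false) ↔ G.col e = l)) ∧
    ∀ e, G.s e = v → o e = false) ∨
  ((∀ e, G.r e = v → o e = true) ∧
    ∀ e f, G.s e = v → G.s f = v → o e = true → o f = true → e = f)

/-- `o` is a proper orientation at `v`. -/
def ProperOrientAt (G : SepGraph V E Λ) (o : E → Bool) (v : V) : Prop :=
  ((∃ l : Λ, (∃ e, G.col e = l) ∧ (∀ e, (G.r e = v ∧ o e = false) ↔ G.col e = l)) ∧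
    ∀ e, G.s e = v → o e = false) ∨
  ((∀ e, G.r e = v → o e = true) ∧ ∃! e, G.s e = v ∧ o e = true)

/-- `w` is a base-simple closed path at `v`. -/
def BaseSimple (G : SepGraph V E Λ) (w : List (Letter E)) (v : V) : Prop :=
  IsClosed G w v ∧
    ∀ p, p ≠ [] → p.length < w.length → p <+: w → ¬ lastIs G p v

def linv (a : Letter E) : Letter E := (a.1, !a.2)

/-- The item of `src G a` through which `a` leaves: the edge `f ∈ s⁻¹(src G a)` for `a = (f, true)`,
the colour class of `f` in `C_{src G a}` for `a = (f, false)`. -/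
def item (G : SepGraph V E Λ) (a : Letter E) : E ⊕ Λ :=
  if a.2 then Sum.inl a.1 else Sum.inr (G.col a.1)

variable {G : SepGraph V E Λ}

@[simp] theorem linv_linv (a : Letter E) : linv (linv a) = a := by
  simp [linv]

@[simp] theorem src_linv (a : Letter E) : src G (linv a) = rng G a := by
  obtain ⟨f, _ | _⟩ := a <;> rfl

@[simp] theorem rng_linv (a : Letter E) : rng G (linv a) = src G a := by
  obtain ⟨f, _ | _⟩ := a <;> rfl

theorem item_eq_inl_iff {a : Letter E} {f : E} : item G a = Sum.inl f ↔ a = (f, true) := by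
  obtain ⟨g, _ | _⟩ := a <;> simp [item]

theorem ok_iff {a b : Letter E} :
    ok G a b ↔ src G b = rng G a ∧ item G (linv a) ≠ item G b := by
  obtain ⟨f, _ | _⟩ := a <;> obtain ⟨g, _ | _⟩ := b <;> simp [ok, item, linv, eq_comm]

theorem ok.linv {a b : Letter E} (h : ok G a b) : ok G (linv b) (linv a) := by
  rw [ok_iff] at h ⊢
  simpa [eq_comm, ne_comm] using h

theorem admissible_append {w₁ w₂ : List (Letter E)} :
    Admissible G (w₁ ++ w₂) ↔ Admissible G w₁ ∧ Admissible G w₂ ∧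
      ∀ x ∈ w₁.getLast?, ∀ y ∈ w₂.head?, ok G x y :=
  List.isChain_append

theorem wInv_eq_reverse_map (w : List (Letter E)) : wInv w = (w.map linv).reverse := rfl

@[simp] theorem wInv_nil : wInv ([] : List (Letter E)) = [] := rfl

@[simp] theorem wInv_cons (a : Letter E) (w : List (Letter E)) :
    wInv (a :: w) = wInv w ++ [linv a] := by
  simp [wInv_eq_reverse_map]

theorem wInv_append (w₁ w₂ : List (Letter E)) : wInv (w₁ ++ w₂) = wInv w₂ ++ wInv w₁ := by
  simp [wInv_eq_reverse_map]

@[simp] theorem head?_wInv (w : List (Letter E)) : (wInv w).head? = w.getLast?.map linv := by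
  simp [wInv_eq_reverse_map, List.head?_reverse, List.getLast?_map]

theorem Admissible.wInv {w : List (Letter E)} (h : Admissible G w) : Admissible G (wInv w) := by
  rw [Admissible, wInv_eq_reverse_map, List.Chain', List.isChain_reverse, List.isChain_map]
  exact h.imp fun _ _ hab => hab.linv

theorem isPath_singleton (a : Letter E) : IsPath G [a] (src G a) (rng G a) := by
  refine ⟨List.isChain_singleton a, by simp, ?_, ?_⟩ <;> simp [headIs, lastIs]

theorem IsPath.tail {a : Letter E} {w : List (Letter E)} {u v : V} (h : IsPath G (a :: w) u v) :
    IsPath G w (rng G a) v := by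
  obtain ⟨hadm, -, -, hlast⟩ := h
  refine ⟨hadm.tail, fun hw => ?_, fun b hb => ?_, fun b hb => hlast b ?_⟩
  · subst hw; exact hlast a rfl
  · rw [((List.isChain_cons.mp hadm).1 b hb).1, rng]
  · cases w <;> simp_all

theorem IsClosed.isPath {w : List (Letter E)} {v : V} (h : IsClosed G w v) : IsPath G w v v :=
  ⟨h.2.1, fun _ => rfl, h.2.2⟩

theorem CycleAt.isClosed {w : List (Letter E)} {v : V} (h : CycleAt G w v) :
    IsClosed G w v := by
  obtain ⟨⟨hne, hadm⟩, hhead⟩ := h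
  refine ⟨hne, (admissible_append.mp hadm).1, hhead, fun d hd => ?_⟩
  obtain ⟨a, ha⟩ := Option.ne_none_iff_exists'.mp (mt List.head?_eq_none_iff.mp hne)
  rw [← hhead a ha, ← ((admissible_append.mp hadm).2.2 d hd a ha).1]

theorem CycleAt.wInv {w : List (Letter E)} {v : V} (h : CycleAt G w v) :
    CycleAt G (wInv w) v := by
  refine ⟨⟨by simpa [wInv_eq_reverse_map] using h.1.1, ?_⟩, fun a ha => ?_⟩
  · rw [← wInv_append]; exact h.1.2.wInv
  · obtain ⟨d, hd, rfl⟩ := Option.mem_map.mp (head?_wInv w ▸ ha)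
    rw [src_linv]; exact h.isClosed.2.2.2 d hd

/-- `γ` is a closed path at `v` leaving through the item `t` and coming back through `p`,
i.e. its reverse leaves through `p`. -/
def IsLoop (G : SepGraph V E Λ) (γ : List (Letter E)) (v : V) (t p : E ⊕ Λ) : Prop :=
  IsClosed G γ v ∧ (∀ a ∈ γ.head?, item G a = t) ∧ ∀ a ∈ γ.getLast?, item G (linv a) = p

theorem IsLoop.ok_getLast?_head? {γ₁ γ₂ : List (Letter E)} {v : V} {t₁ p₁ t₂ p₂ : E ⊕ Λ}
    (h₁ : IsLoop G γ₁ v t₁ p₁) (h₂ : IsLoop G γ₂ v t₂ p₂) (h : p₁ ≠ t₂) :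
    ∀ x ∈ γ₁.getLast?, ∀ y ∈ γ₂.head?, ok G x y := fun x hx y hy =>
  ok_iff.mpr ⟨(h₂.1.2.2.1 y hy).trans (h₁.1.2.2.2 x hx).symm, by
    rw [h₁.2.2 x hx, h₂.2.1 y hy]; exact h⟩

theorem IsLoop.append {γ₁ γ₂ : List (Letter E)} {v : V} {t₁ p₁ t₂ p₂ : E ⊕ Λ}
    (h₁ : IsLoop G γ₁ v t₁ p₁) (h₂ : IsLoop G γ₂ v t₂ p₂) (h : p₁ ≠ t₂) :
    IsLoop G (γ₁ ++ γ₂) v t₁ p₂ := by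
  have hne₁ := h₁.1.1
  have hne₂ := h₂.1.1
  refine ⟨⟨by simp [hne₁], admissible_append.mpr ⟨h₁.1.2.1, h₂.1.2.1, h₁.ok_getLast?_head? h₂ h⟩,
    ?_, ?_⟩, ?_, ?_⟩
  all_goals
    intro a ha
    simp only [List.head?_append_of_ne_nil _ hne₁, List.getLast?_append_of_ne_nil _ hne₂] at ha
  exacts [h₁.1.2.2.1 a ha, h₂.1.2.2.2 a ha, h₁.2.1 a ha, h₂.2.2 a ha]

theorem IsLoop.cycleAt {γ : List (Letter E)} {v : V} {t p : E ⊕ Λ} (h : IsLoop G γ v t p)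
    (hpt : p ≠ t) : CycleAt G γ v :=
  ⟨⟨h.1.1, (h.append h hpt).1.2.1⟩, h.1.2.2.1⟩

theorem CycleAt.isLoop {γ : List (Letter E)} {v : V} {a d : Letter E} (h : CycleAt G γ v)
    (ha : γ.head? = some a) (hd : γ.getLast? = some d) :
    IsLoop G γ v (item G a) (item G (linv d)) ∧ item G (linv d) ≠ item G a := by
  refine ⟨⟨h.isClosed, ?_, ?_⟩, (ok_iff.mp ((admissible_append.mp h.1.2).2.2 d hd a ha)).2⟩
  · simp [ha]
  · simp [hd]

def CycleAvoids (G : SepGraph V E Λ) (v : V) (Q : E ⊕ Λ) : Prop :=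
  ∃ γ t p, IsLoop G γ v t p ∧ p ≠ t ∧ t ≠ Q ∧ p ≠ Q

theorem cycleAvoids_of_append {γ₁ γ₂ : List (Letter E)} {v : V} {t₁ p₁ t₂ p₂ Q : E ⊕ Λ}
    (h₁ : IsLoop G γ₁ v t₁ p₁) (h₂ : IsLoop G γ₂ v t₂ p₂) (h₁₂ : p₁ ≠ t₂) (h₂₁ : p₂ ≠ t₁)
    (ht₁ : t₁ ≠ Q) (hp₂ : p₂ ≠ Q) : CycleAvoids G v Q :=
  ⟨_, _, _, h₁.append h₂ h₁₂, h₂₁, ht₁, hp₂⟩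

theorem cycleAvoids_of_isLoop_of_isLoop {γ₁ γ₂ : List (Letter E)} {v : V}
    {t₁ p₁ t₂ p₂ Q : E ⊕ Λ} (h₁ : IsLoop G γ₁ v t₁ p₁) (h₂ : IsLoop G γ₂ v t₂ p₂)
    (ht : t₁ ≠ t₂) (ht₁ : t₁ ≠ Q) (ht₂ : t₂ ≠ Q) (hp₁ : p₁ ≠ Q) : CycleAvoids G v Q := by
  by_cases hpt₁ : p₁ = t₁
  · by_cases hpt₂ : p₂ = t₁
    · exact ⟨γ₂, t₂, p₂, h₂, hpt₂ ▸ ht, ht₂, hpt₂ ▸ ht₁⟩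
    · exact cycleAvoids_of_append h₂ h₁ hpt₂ (hpt₁ ▸ ht) ht₂ hp₁
  · exact ⟨γ₁, t₁, p₁, h₁, hpt₁, ht₁, hp₁⟩

theorem IsClosed.exists_isLoop {a : Letter E} {w : List (Letter E)} {v : V}
    (h : IsClosed G (a :: w) v) : ∃ p, IsLoop G (a :: w) v (item G a) p := by
  obtain ⟨d, hd⟩ := Option.ne_none_iff_exists'.mp (mt List.getLast?_eq_none_iff.mp h.1)
  exact ⟨item G (linv d), h, fun b hb => by cases hb; rfl, fun b hb => by simp_all⟩

theorem RetItem.exists_isLoop {v : V} {x : E ⊕ Λ} (h : RetItem G v x) :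
    ∃ γ p, IsLoop G γ v x p := by
  cases x with
  | inl f =>
    obtain ⟨rfl, -, -, w, u, hw⟩ := h
    obtain rfl : u = G.s f := (hw.2.2.1 (f, true) rfl).symm
    exact ⟨_, hw.exists_isLoop⟩
  | inr l =>
    obtain ⟨f, rfl, rfl, -, -, w, u, hw⟩ := h
    obtain rfl : u = G.r f := (hw.2.2.1 (f, false) rfl).symm
    exact ⟨_, hw.exists_isLoop⟩

theorem Branching.exists_retItem_pair {v : V} (h : Branching G v) (Q : E ⊕ Λ) :
    ∃ x y, x ≠ y ∧ x ≠ Q ∧ y ≠ Q ∧ RetItem G v x ∧ RetItem G v y := by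
  obtain ⟨x, y, z, hxy, hxz, hyz, hx, hy, hz⟩ := h
  by_cases hxQ : x = Q
  · exact ⟨y, z, hyz, hxQ ▸ hxy.symm, hxQ ▸ hxz.symm, hy, hz⟩
  by_cases hyQ : y = Q
  · exact ⟨x, z, hxz, hxQ, hyQ ▸ hyz.symm, hx, hz⟩
  exact ⟨x, y, hxy, hxQ, hyQ, hx, hy⟩

/-- Take two returning items other than `Q₁`. If one of their loops does not come back through
`Q₁`, the loops yield a cycle avoiding `Q₁`; otherwise both come back through `Q₁`, and the two
loops, concatenated starting with one that does not leave through `Q₂`, avoid `Q₂`. -/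
theorem Branching.cycleAvoids_or {v : V} (h : Branching G v) {Q₁ Q₂ : E ⊕ Λ} (hQ : Q₁ ≠ Q₂) :
    CycleAvoids G v Q₁ ∨ CycleAvoids G v Q₂ := by
  obtain ⟨x₁, x₂, hx, hx₁, hx₂, h₁, h₂⟩ := h.exists_retItem_pair Q₁
  obtain ⟨γ₁, p₁, hγ₁⟩ := h₁.exists_isLoop
  obtain ⟨γ₂, p₂, hγ₂⟩ := h₂.exists_isLoop
  by_cases hp₁ : p₁ = Q₁
  · by_cases hp₂ : p₂ = Q₁
    · subst hp₁ hp₂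
      right
      by_cases hx₁Q : x₁ = Q₂
      · exact cycleAvoids_of_append hγ₂ hγ₁ hx₁.symm hx₂.symm (hx₁Q ▸ hx.symm) hQ
      · exact cycleAvoids_of_append hγ₁ hγ₂ hx₂.symm hx₁.symm hx₁Q hQ
    · exact .inl (cycleAvoids_of_isLoop_of_isLoop hγ₂ hγ₁ hx.symm hx₂ hx₁ hp₂)
  · exact .inl (cycleAvoids_of_isLoop_of_isLoop hγ₁ hγ₂ hx hx₁ hx₂ hp₁)

theorem multimap_self_of_cycleAt {β : List (Letter E)} {v : V} (h : CycleAt G β v) :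
    Multimap G v v :=
  ⟨[], β, ⟨List.isChain_nil, fun _ => rfl, by simp [headIs], by simp [lastIs]⟩, h,
    by simpa using (admissible_append.mp h.1.2).1⟩

theorem multimap_of_cycleAvoids {α : List (Letter E)} {u v : V} {c : Letter E}
    (hα : IsPath G α u v) (hc : α.getLast? = some c) (h : CycleAvoids G v (item G (linv c))) :
    Multimap G u v := by
  obtain ⟨γ, t, p, hγ, hpt, ht, hp⟩ := h
  have hne := hγ.1.1
  refine ⟨α, γ, hα, hγ.cycleAt hpt, admissible_append.mpr ⟨admissible_append.mpr
    ⟨hα.1, hγ.1.2.1, fun x hx y hy => ?_⟩, hα.1.wInv, fun x hx y hy => ?_⟩⟩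
  · obtain rfl : x = c := by simpa [hc] using hx.symm
    exact ok_iff.mpr ⟨(hγ.1.2.2.1 y hy).trans (hα.2.2.2 x hc).symm,
      (hγ.2.1 y hy).symm ▸ ht.symm⟩
  · rw [List.getLast?_append_of_ne_nil _ hne] at hx
    obtain rfl : y = linv c := by simpa [hc] using hy.symm
    refine ok_iff.mpr ⟨?_, (hγ.2.2 x hx).symm ▸ hp⟩
    rw [src_linv, hα.2.2.2 c hc, hγ.1.2.2.2 x hx]

theorem multimap_rng_of_cons {a : Letter E} {α β : List (Letter E)} {u v : V}
    (hα : IsPath G (a :: α) u v) (hβ : CycleAt G β v)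
    (h : Admissible G ((a :: α) ++ β ++ wInv (a :: α))) : Multimap G (rng G a) v :=
  ⟨α, β, hα.tail, hβ, List.IsChain.infix h ⟨[a], [linv a], by simp⟩⟩

theorem IsPath.cons {a b : Letter E} {α : List (Letter E)} {u v : V}
    (hα : IsPath G (a :: α) u v) (hba : ok G b a) : IsPath G (b :: a :: α) (src G b) v := by
  refine ⟨List.isChain_cons.mpr ⟨fun y hy => ?_, hα.1⟩, by simp, fun x hx => ?_,
    fun x hx => hα.2.2.2 x (by simpa using hx)⟩
  · cases hy; exact hba
  · cases hx; rfl

theorem multimap_src_of_cons {a b : Letter E} {α β : List (Letter E)} {u v : V}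
    (hα : IsPath G (a :: α) u v) (hβ : CycleAt G β v)
    (h : Admissible G ((a :: α) ++ β ++ wInv (a :: α))) (hba : ok G b a) :
    Multimap G (src G b) v := by
  refine ⟨b :: a :: α, β, hα.cons hba, hβ, ?_⟩
  have hword : (b :: a :: α) ++ β ++ wInv (b :: a :: α) =
      b :: ((a :: α) ++ β ++ wInv (a :: α) ++ [linv b]) := by simp
  rw [hword]
  refine List.isChain_cons.mpr ⟨fun y hy => ?_,
    admissible_append.mpr ⟨h, List.isChain_singleton _, fun x hx y hy => ?_⟩⟩
  · cases hy; exact hba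
  · rw [wInv_cons, ← List.append_assoc, List.getLast?_concat] at hx
    cases hx; cases hy; exact hba.linv

theorem multimap_r_of_cycleAvoids {e : E} {v : V} (hse : G.s e = v)
    (h : CycleAvoids G v (Sum.inl e)) : Multimap G (G.r e) v :=
  have hpath : IsPath G [(e, false)] (G.r e) (G.s e) := isPath_singleton (e, false)
  multimap_of_cycleAvoids (c := (e, false)) (hse ▸ hpath) rfl h

theorem multimap_r_of_cycleAt_cons {e : E} {β : List (Letter E)} {v : V} (hv : Branching G v)
    (hβ : CycleAt G ((e, true) :: β) v) : Multimap G (G.r e) v := by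
  have hse : G.s e = v := hβ.2 _ rfl
  have hpath : IsPath G β (G.r e) v := hβ.isClosed.isPath.tail
  rcases hc : β.getLast? with _ | c
  · rw [hpath.2.1 (List.getLast?_eq_none_iff.mp hc)]
    exact multimap_self_of_cycleAt hβ
  · have hQ : item G (linv c) ≠ Sum.inl e :=
      (hβ.isLoop rfl (by rw [List.getLast?_cons, hc]; rfl)).2
    rcases hv.cycleAvoids_or hQ.symm with h | h
    · exact multimap_r_of_cycleAvoids hse h
    · exact multimap_of_cycleAvoids hpath hc h

theorem multimap_r_of_cycleAt {e : E} {β : List (Letter E)} {v : V} (hv : Branching G v)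
    (hse : G.s e = v) (hβ : CycleAt G β v) : Multimap G (G.r e) v := by
  obtain ⟨a, ha⟩ := Option.ne_none_iff_exists'.mp (mt List.head?_eq_none_iff.mp hβ.1.1)
  obtain ⟨d, hd⟩ := Option.ne_none_iff_exists'.mp (mt List.getLast?_eq_none_iff.mp hβ.1.1)
  by_cases hae : a = (e, true)
  · obtain ⟨β, rfl⟩ := List.head?_eq_some_iff.mp (hae ▸ ha)
    exact multimap_r_of_cycleAt_cons hv hβ
  by_cases hde : d = (e, false)
  · obtain ⟨β', hβ'⟩ := List.head?_eq_some_iff.mp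
      (by rw [head?_wInv, hd, hde]; rfl : (wInv β).head? = some (e, true))
    exact multimap_r_of_cycleAt_cons hv (hβ' ▸ hβ.wInv)
  obtain ⟨hloop, hne⟩ := hβ.isLoop ha hd
  refine multimap_r_of_cycleAvoids hse ⟨β, _, _, hloop, hne, ?_, ?_⟩ <;>
    rw [Ne, item_eq_inl_iff]
  · exact hae
  · exact fun h => hde (by simpa [linv] using congrArg linv h)

/-- The set `E⁰_BF` of vertices `u` such that `u ⊸ v` fails for every
branching vertex `v` is hereditary: if `r(e) ∈ E⁰_BF` then `s(e) ∈ E⁰_BF`. -/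
theorem stmt12 {V E Λ : Type} (G : SepGraph V E Λ) (e : E)
    (hr : ∀ v : V, Branching G v → ¬ Multimap G (G.r e) v) :
    ∀ v : V, Branching G v → ¬ Multimap G (G.s e) v := by
  rintro v hv ⟨α, β, hα, hβ, hadm⟩
  refine hr v hv ?_
  cases α with
  | nil => exact multimap_r_of_cycleAt hv (hα.2.1 rfl) hβ
  | cons a α =>
    by_cases ha : a = (e, true)
    · subst ha
      exact multimap_rng_of_cons hα hβ hadm
    · have hok : ok G (e, false) a :=
        ok_iff.mpr ⟨hα.2.2.1 a rfl, fun h => ha (item_eq_inl_iff.mp h.symm)⟩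
      exact multimap_src_of_cons hα hβ hadm hok

end SepGraphStmt
end

section
/- Let E be a finite directed graph (with separation C) admitting no cycles in the separated-graph sense (no nontrivial admissible closed path α with αα admissible). Then every admissible path in (E, C) has length at most 3·|E⁰|. -/
namespace SepGraphStmt

variable {V E Λ : Type}

/-!
An admissible path enters and leaves a vertex `v` through *ports*: the edges with source `v` and
the colour classes in `C_v`. Admissibility only forbids leaving through the port just entered by.
If a path visits `v` three times, it contains two closed paths `p`, `q` at `v` with `p ++ q`
admissible. A closed path that is not a cycle re-enters `v` through the port it left by; if this
happens for both `p` and `q`, their ports differ (as `p ++ q` is admissible), and then `q ++ p`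
is a cycle. So in a graph without cycles every vertex is the source of at most two letters of an
admissible path, which then has length at most `2 * |E⁰|`.
-/

lemma _root_.List.exists_eq_append_cons_of_cons_sublist {α : Type*} {a : α} {l w : List α}
    (h : List.Sublist (a :: l) w) : ∃ x y, w = x ++ a :: y ∧ List.Sublist l y := by
  obtain ⟨r₁, r₂, rfl, ha, hl⟩ := List.cons_sublist_iff.1 h
  obtain ⟨s, t, rfl⟩ := List.append_of_mem ha
  exact ⟨s, t ++ r₂, by simp, hl.trans (List.suffix_append _ _).sublist⟩

lemma _root_.List.exists_lt_count_of_mul_card_lt_length {α : Type*} [Fintype α] [DecidableEq α]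
    {l : List α} {n : ℕ} (h : n * Fintype.card α < l.length) : ∃ a, n < l.count a := by
  by_contra! hle
  have hsum : ∑ a, l.count a = l.length := by
    simpa using Multiset.sum_count_eq_card (s := Finset.univ) (m := (l : Multiset α)) (by simp)
  have := Finset.sum_le_sum fun a (_ : a ∈ Finset.univ) => hle a
  simp only [Finset.sum_const, Finset.card_univ, smul_eq_mul] at this
  rw [hsum, mul_comm] at this
  omega

/-- Ports at `v` are encoded in `E ⊕ Λ`: `Sum.inl e` for an edge with source `v`,
`Sum.inr l` for a colour class of edges with range `v`. -/
def inPort (G : SepGraph V E Λ) (a : Letter E) : E ⊕ Λ :=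
  if a.2 then Sum.inr (G.col a.1) else Sum.inl a.1

def outPort (G : SepGraph V E Λ) (a : Letter E) : E ⊕ Λ :=
  if a.2 then Sum.inl a.1 else Sum.inr (G.col a.1)

section

variable {G : SepGraph V E Λ}

lemma admissible_append_iff {p q : List (Letter E)} :
    Admissible G (p ++ q) ↔ Admissible G p ∧ Admissible G q ∧
      ∀ a ∈ p.getLast?, ∀ b ∈ q.head?, ok G a b :=
  List.isChain_append

lemma Admissible.infix {p w : List (Letter E)} (hw : Admissible G w) (hp : p <:+: w) :
    Admissible G p :=
  List.IsChain.infix hw hp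

lemma ok_iff_inPort_ne_outPort {a b : Letter E} (h : src G b = rng G a) :
    ok G a b ↔ inPort G a ≠ outPort G b := by
  obtain ⟨e, _ | _⟩ := a <;> obtain ⟨f, _ | _⟩ := b <;>
    simp [ok, inPort, outPort, h, eq_comm]

lemma IsClosed.ne_nil {p : List (Letter E)} {v : V} (hp : IsClosed G p v) : p ≠ [] := hp.1

lemma IsClosed.append_admissible_iff {p q : List (Letter E)} {v : V}
    (hp : IsClosed G p v) (hq : IsClosed G q v) :
    Admissible G (p ++ q) ↔ inPort G (p.getLast hp.ne_nil) ≠ outPort G (q.head hq.ne_nil) := by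
  obtain ⟨hp0, hpA, -, hpL⟩ := hp
  obtain ⟨hq0, hqA, hqH, -⟩ := hq
  have hlast := hpL _ (List.getLast_mem_getLast? hp0)
  have hhead := hqH _ (List.head_mem_head? hq0)
  rw [admissible_append_iff, ← ok_iff_inPort_ne_outPort (hhead.trans hlast.symm)]
  simp only [List.getLast?_eq_some_getLast hp0, List.head?_eq_some_head hq0, Option.mem_def,
    Option.some.injEq, forall_eq']
  exact ⟨fun h => h.2.2, fun h => ⟨hpA, hqA, h⟩⟩

lemma IsClosed.append {p q : List (Letter E)} {v : V} (hp : IsClosed G p v)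
    (hq : IsClosed G q v) (hpq : Admissible G (p ++ q)) : IsClosed G (p ++ q) v := by
  obtain ⟨hp0, -, hpH, -⟩ := hp
  obtain ⟨hq0, -, -, hqL⟩ := hq
  refine ⟨by simp [hp0], hpq, ?_, ?_⟩
  · simpa [headIs, List.head?_append, List.head?_eq_some_head hp0] using hpH
  · simpa [lastIs, List.getLast?_append, List.getLast?_eq_some_getLast hq0] using hqL

lemma exists_isCycle_of_isClosed_append {p q : List (Letter E)} {v : V}
    (hp : IsClosed G p v) (hq : IsClosed G q v) (hpq : Admissible G (p ++ q)) :
    ∃ w, IsCycle G w := by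
  by_contra! hnc
  have hport : ∀ r (hr : IsClosed G r v),
      inPort G (r.getLast hr.ne_nil) = outPort G (r.head hr.ne_nil) :=
    fun r hr => not_not.1 fun h => hnc r ⟨hr.ne_nil, (hr.append_admissible_iff hr).2 h⟩
  have hjunction := (hp.append_admissible_iff hq).1 hpq
  have hqp : Admissible G (q ++ p) := by
    rw [hq.append_admissible_iff hp, hport q hq]
    rwa [← hport p hp, ne_comm]
  have hqpc := hq.append hp hqp
  refine hnc _ ⟨hqpc.ne_nil, (hqpc.append_admissible_iff hqpc).2 ?_⟩
  rwa [List.getLast_append_of_ne_nil _ hp.ne_nil, List.head_append_of_ne_nil hq.ne_nil]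

lemma isClosed_of_admissible_append_cons {a b : Letter E} {p r : List (Letter E)} {v : V}
    (h : Admissible G (a :: p ++ b :: r)) (ha : src G a = v) (hb : src G b = v) :
    IsClosed G (a :: p) v := by
  obtain ⟨hp, -, hjunction⟩ := admissible_append_iff.1 h
  refine ⟨List.cons_ne_nil _ _, hp, by simpa [headIs], fun x hx => ?_⟩
  rw [← hb, (hjunction x hx b rfl).1]

lemma exists_isCycle_of_three_visits {a b c : Letter E} {p q r : List (Letter E)} {v : V}
    (h : Admissible G (a :: p ++ b :: q ++ c :: r))
    (ha : src G a = v) (hb : src G b = v) (hc : src G c = v) :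
    ∃ w, IsCycle G w := by
  have h' : Admissible G (a :: p ++ (b :: q ++ c :: r)) := by simpa only [List.append_assoc] using h
  have hab : Admissible G (a :: p ++ b :: q) := h.infix (List.prefix_append _ _).isInfix
  have hbc : Admissible G (b :: q ++ c :: r) := h'.infix (List.suffix_append _ _).isInfix
  exact exists_isCycle_of_isClosed_append (isClosed_of_admissible_append_cons h' ha hb)
    (isClosed_of_admissible_append_cons hbc hb hc) hab

lemma exists_isCycle_of_three_le_count_map_src [DecidableEq V] {w : List (Letter E)} {v : V}
    (hw : Admissible G w) (hv : 3 ≤ (w.map (src G)).count v) : ∃ u, IsCycle G u := by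
  obtain ⟨l, hl, hlv⟩ := List.sublist_map_iff.1 (List.replicate_sublist_iff.2 hv)
  obtain ⟨a, b, c, rfl, ha, hb, hc⟩ : ∃ a b c, l = [a, b, c] ∧
      src G a = v ∧ src G b = v ∧ src G c = v := by
    rcases l with _ | ⟨a, _ | ⟨b, _ | ⟨c, _ | _⟩⟩⟩ <;> simp [List.replicate] at hlv
    exact ⟨a, b, c, rfl, hlv.1.symm, hlv.2.1.symm, hlv.2.2.symm⟩
  obtain ⟨x, y, rfl, hbc⟩ := List.exists_eq_append_cons_of_cons_sublist hl
  obtain ⟨p, y', rfl, hc'⟩ := List.exists_eq_append_cons_of_cons_sublist hbc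
  obtain ⟨q, r, rfl, -⟩ := List.exists_eq_append_cons_of_cons_sublist hc'
  have hsuffix : Admissible G (a :: (p ++ b :: (q ++ c :: r))) :=
    hw.infix (List.suffix_append _ _).isInfix
  exact exists_isCycle_of_three_visits (by simpa using hsuffix) ha hb hc

lemma length_le_two_mul_card_of_forall_not_isCycle [Fintype V]
    (hnc : ∀ u, ¬ IsCycle G u) {w : List (Letter E)} (hw : Admissible G w) :
    w.length ≤ 2 * Fintype.card V := by
  classical
  by_contra! hlen
  obtain ⟨v, hv⟩ := List.exists_lt_count_of_mul_card_lt_length (l := w.map (src G))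
    (by simpa using hlen)
  obtain ⟨u, hu⟩ := exists_isCycle_of_three_le_count_map_src hw hv
  exact hnc u hu

end

theorem stmt16_general {V E Λ : Type} [Fintype V] (G : SepGraph V E Λ)
    (hnc : ∀ w : List (Letter E), ¬ IsCycle G w) :
    ∀ w : List (Letter E), Admissible G w → w.length ≤ 3 * Fintype.card V :=
  fun _ hw => (length_le_two_mul_card_of_forall_not_isCycle hnc hw).trans (by omega)

/-- In a finite separated graph admitting no cycles, every admissible
path has length at most `3 * |E⁰|`. -/
theorem stmt16 {V E Λ : Type} [Fintype V] [Fintype E] (G : SepGraph V E Λ)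
    (hnc : ∀ w : List (Letter E), ¬ IsCycle G w) :
    ∀ w : List (Letter E), Admissible G w → w.length ≤ 3 * Fintype.card V :=
  stmt16_general G hnc

end SepGraphStmt
end
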